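/- For every positive integer n, the largest size of a (2n, 2n+1, 2n+2)-core partition is (n+1)·C(n+1, 3) + C(n+2, 3), and exactly one (2n, 2n+1, 2n+2)-core partition attains this size. -/

import Mathlib

open Finset

/-- A partition: a weakly decreasing finite list of positive integers. -/
structure NatPartition where
  parts : List ℕ
  sorted : parts.Pairwise (· ≥ ·)
  pos : ∀ x ∈ parts, 0 < x

namespace NatPartition

/-- The size of a partition: the sum of its parts. -/
def size (l : NatPartition) : ℕ := l.parts.sum

/-- The hook length of the box in row `i`, column `j` (both 0-indexed):
arm + leg + 1, computed as `λ_i - j + #{k : λ_k > j} - i - 1`. -/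
def hook (l : NatPartition) (i j : ℕ) : ℕ :=
  l.parts.getD i 0 - j + l.parts.countP (fun a => decide (j < a)) - i - 1

/-- The box `(i, j)` (0-indexed) belongs to the Young diagram of `l`. -/
def InDiagram (l : NatPartition) (i j : ℕ) : Prop :=
  i < l.parts.length ∧ j < l.parts.getD i 0

/-- A partition is a `t`-core if no hook length is divisible by `t`. -/
def IsCore (l : NatPartition) (t : ℕ) : Prop :=
  ∀ i j, l.InDiagram i j → ¬ t ∣ l.hook i j

/-- The β-set of a partition: the set of first-column hook lengths. -/
def betaSet (l : NatPartition) : Finset ℕ :=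
  (Finset.range l.parts.length).image (fun i => l.hook i 0)

end NatPartition

namespace Core18
set_option maxHeartbeats 1000000

lemma psum1 (m : ℕ) : 2 * ∑ k ∈ range m, (k:ℤ) = m*(m-1) := by
  induction m with
  | zero => simp
  | succ m ih => rw [Finset.sum_range_succ]; push_cast; push_cast at ih; ring_nf; ring_nf at ih; linarith

lemma psum2 (m : ℕ) : 6 * ∑ k ∈ range m, (k:ℤ)^2 = m*(m-1)*(2*m-1) := by
  induction m with
  | zero => simp
  | succ m ih => rw [Finset.sum_range_succ]; push_cast; push_cast at ih; ring_nf; ring_nf at ih; linarith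

lemma psum3 (m : ℕ) : 4 * ∑ k ∈ range m, (k:ℤ)^3 = m^2*(m-1)^2 := by
  induction m with
  | zero => simp
  | succ m ih => rw [Finset.sum_range_succ]; push_cast; push_cast at ih; ring_nf; ring_nf at ih; linarith

lemma psum_poly (m : ℕ) (c0 c1 c2 c3 : ℤ) :
    12 * ∑ k ∈ range m, (c0 + c1*k + c2*(k:ℤ)^2 + c3*(k:ℤ)^3)
      = 12*c0*m + 6*c1*(m*(m-1)) + 2*c2*(m*(m-1)*(2*m-1)) + 3*c3*(m^2*(m-1)^2) := by
  have h1 := psum1 m; have h2 := psum2 m; have h3 := psum3 m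
  have : ∑ k ∈ range m, (c0 + c1*k + c2*(k:ℤ)^2 + c3*(k:ℤ)^3)
      = c0 * m + c1 * ∑ k ∈ range m, (k:ℤ) + c2 * ∑ k ∈ range m, (k:ℤ)^2
        + c3 * ∑ k ∈ range m, (k:ℤ)^3 := by
    rw [Finset.sum_add_distrib, Finset.sum_add_distrib, Finset.sum_add_distrib]
    rw [← Finset.mul_sum, ← Finset.mul_sum, ← Finset.mul_sum]
    simp [Finset.sum_const, mul_comm]
  rw [this]; linear_combination 6*c1*h1 + 2*c2*h2 + 3*c3*h3

/-! ### The Psi functional and its positivity -/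

/-- suffix sum: `∑_{j<m} u (k+j)` -/
def suf (u : ℕ → ℕ) (k m : ℕ) : ℤ := ∑ j ∈ range m, (u (k+j) : ℤ)

def Psi (n : ℕ) (u : ℕ → ℕ) : ℤ :=
  ∑ k ∈ range n, (u k : ℤ) * ((2*n+2)*k + 1 - (n:ℤ)^2 + suf u k (n - k))

lemma Psi_zero_of (n : ℕ) (u : ℕ → ℕ) (h : ∀ k < n, u k = 0) : Psi n u = 0 := by
  unfold Psi
  apply Finset.sum_eq_zero
  intro k hk
  rw [h k (mem_range.mp hk)]
  simp

lemma Psi_decomp (n : ℕ) (u : ℕ → ℕ) :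
    Psi (n+1) u = (u 0 : ℤ) * ((u 0:ℤ) + (∑ k ∈ range n, (u (k+1):ℤ)) + 1 - ((n:ℤ)+1)^2)
      + Psi n (fun k => u (k+1)) + ∑ k ∈ range n, (2*(k:ℤ)+3) * (u (k+1)) := by
  unfold Psi
  rw [Finset.sum_range_succ']
  have hsuf0 : suf u 0 (n+1-0) = (u 0:ℤ) + ∑ k ∈ range n, (u (k+1):ℤ) := by
    unfold suf
    simp only [Nat.sub_zero]
    rw [Finset.sum_range_succ']
    simp [add_comm]
  have hterm : ∀ k ∈ range n,
      (u (k+1) : ℤ) * ((2*(n+1:ℕ)+2)*(k+1:ℕ) + 1 - ((n+1:ℕ):ℤ)^2 + suf u (k+1) (n+1-(k+1)))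
      = ((u (k+1) : ℤ) * ((2*n+2)*k + 1 - (n:ℤ)^2 + suf (fun k => u (k+1)) k (n - k)))
        + (2*(k:ℤ)+3) * (u (k+1)) := by
    intro k hk
    have hsufeq : suf u (k+1) (n+1-(k+1)) = suf (fun k => u (k+1)) k (n - k) := by
      unfold suf
      rw [Nat.succ_sub_succ]
      apply Finset.sum_congr rfl
      intro j _
      have harg : k+1+j = k+j+1 := by omega
      rw [harg]
    rw [hsufeq]
    push_cast
    ring
  rw [Finset.sum_congr rfl hterm, Finset.sum_add_distrib, hsuf0]
  push_cast
  ring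

/-- the single-variable inequality used in the induction step -/
lemma ineq_step (n : ℕ) (a : ℕ) (ha : 1 ≤ a) (ha2 : a ≤ 2*n+1) :
    0 ≤ (a:ℤ) * (a + (∑ k ∈ range n, min (a:ℤ) (2*(n:ℤ)-1-2*(k:ℤ))) + 1 - ((n:ℤ)+1)^2)
        + ∑ k ∈ range n, (2*(k:ℤ)+3) * min (a:ℤ) (2*(n:ℤ)-1-2*(k:ℤ)) := by
  set t := (2*n+1-a)/2 with ht
  set e := (2*n+1-a) % 2 with he
  have htea : a + 2*t + e = 2*n+1 := by omega
  have he1 : e ≤ 1 := by omega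
  have htn : t ≤ n := by omega
  have hsplit : ∀ (f : ℕ → ℤ), ∑ k ∈ range n, f k = ∑ k ∈ range t, f k + ∑ k ∈ Ico t n, f k := by
    intro f
    have h := Finset.sum_Ico_consecutive f (Nat.zero_le t) htn
    simpa [← range_eq_Ico] using h.symm
  have hmin_lo : ∀ k, k < t → min (a:ℤ) (2*(n:ℤ)-1-2*(k:ℤ)) = (a:ℤ) := by
    intro k hk; omega
  have hmin_hi : ∀ k, t ≤ k → k < n → min (a:ℤ) (2*(n:ℤ)-1-2*(k:ℤ)) = 2*(n:ℤ)-1-2*(k:ℤ) := by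
    intro k hk hk2; omega
  have hsum23 : ∀ m : ℕ, ∑ k ∈ range m, (2*(k:ℤ)+3) = (m:ℤ)^2 + 2*m := by
    intro m
    rw [Finset.sum_add_distrib]
    have h2 : ∑ k ∈ range m, 2*(k:ℤ) = 2 * ∑ k ∈ range m, (k:ℤ) := by rw [Finset.mul_sum]
    rw [h2]
    simp only [Finset.sum_const, card_range, nsmul_eq_mul]
    linear_combination psum1 m
  have hc1 : ∑ k ∈ range t, min (a:ℤ) (2*(n:ℤ)-1-2*(k:ℤ)) = ∑ k ∈ range t, (a:ℤ) :=
    Finset.sum_congr rfl (fun k hk => hmin_lo k (mem_range.mp hk))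
  have hS1 : ∑ k ∈ range t, min (a:ℤ) (2*(n:ℤ)-1-2*(k:ℤ)) = (t:ℤ) * a := by
    rw [hc1]; simp [mul_comm]
  have hgen : ∀ m : ℕ, ∑ k ∈ range m, (2*(n:ℤ)-1-2*(k:ℤ)) = (m:ℤ)*(2*(n:ℤ)-m) := by
    intro m
    have hp := psum_poly m (2*(n:ℤ)-1) (-2) 0 0
    have hexp : ∑ k ∈ range m, (2*(n:ℤ)-1-2*(k:ℤ))
        = ∑ k ∈ range m, ((2*(n:ℤ)-1) + (-2)*k + 0*(k:ℤ)^2 + 0*(k:ℤ)^3) := by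
      apply Finset.sum_congr rfl; intro k _; ring
    rw [hexp]; linarith
  have hc2 : ∑ k ∈ Ico t n, min (a:ℤ) (2*(n:ℤ)-1-2*(k:ℤ)) = ∑ k ∈ Ico t n, (2*(n:ℤ)-1-2*(k:ℤ)) := by
    apply Finset.sum_congr rfl
    intro k hk
    rw [mem_Ico] at hk
    exact hmin_hi k hk.1 hk.2
  have hS2 : ∑ k ∈ Ico t n, min (a:ℤ) (2*(n:ℤ)-1-2*(k:ℤ)) = ((n:ℤ)-t)^2 := by
    rw [hc2]
    have hdiff : ∑ k ∈ Ico t n, (2*(n:ℤ)-1-2*(k:ℤ))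
        = ∑ k ∈ range n, (2*(n:ℤ)-1-2*(k:ℤ)) - ∑ k ∈ range t, (2*(n:ℤ)-1-2*(k:ℤ)) := by
      have h := hsplit (fun k => (2*(n:ℤ)-1-2*(k:ℤ))); linarith
    rw [hdiff, hgen n, hgen t]; ring
  have hc3 : ∑ k ∈ range t, (2*(k:ℤ)+3) * min (a:ℤ) (2*(n:ℤ)-1-2*(k:ℤ))
      = ∑ k ∈ range t, (a:ℤ) * (2*(k:ℤ)+3) := by
    apply Finset.sum_congr rfl
    intro k hk
    rw [hmin_lo k (mem_range.mp hk), mul_comm]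
  have hT1 : ∑ k ∈ range t, (2*(k:ℤ)+3) * min (a:ℤ) (2*(n:ℤ)-1-2*(k:ℤ)) = (a:ℤ) * ((t:ℤ)^2+2*t) := by
    rw [hc3, ← Finset.mul_sum, hsum23 t]
  have hT2gen : ∀ m : ℕ, 12 * ∑ k ∈ range m, (2*(k:ℤ)+3) * (2*(n:ℤ)-1-2*(k:ℤ))
      = 12*(6*(n:ℤ)-3)*m + 6*(4*(n:ℤ)-8)*((m:ℤ)*((m:ℤ)-1)) - 8*((m:ℤ)*((m:ℤ)-1)*(2*(m:ℤ)-1)) := by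
    intro m
    have hp := psum_poly m (6*(n:ℤ)-3) (4*(n:ℤ)-8) (-4) 0
    have hexp : ∑ k ∈ range m, (2*(k:ℤ)+3) * (2*(n:ℤ)-1-2*(k:ℤ))
        = ∑ k ∈ range m, ((6*(n:ℤ)-3) + (4*(n:ℤ)-8)*k + (-4)*(k:ℤ)^2 + 0*(k:ℤ)^3) := by
      apply Finset.sum_congr rfl; intro k _; ring
    rw [hexp]; linarith
  have hc4 : ∑ k ∈ Ico t n, (2*(k:ℤ)+3) * min (a:ℤ) (2*(n:ℤ)-1-2*(k:ℤ))
      = ∑ k ∈ Ico t n, (2*(k:ℤ)+3) * (2*(n:ℤ)-1-2*(k:ℤ)) := by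
    apply Finset.sum_congr rfl
    intro k hk
    rw [mem_Ico] at hk
    rw [hmin_hi k hk.1 hk.2]
  have hT2 : 12 * ∑ k ∈ Ico t n, (2*(k:ℤ)+3) * min (a:ℤ) (2*(n:ℤ)-1-2*(k:ℤ))
      = (12*(6*(n:ℤ)-3)*n + 6*(4*(n:ℤ)-8)*((n:ℤ)*((n:ℤ)-1)) - 8*((n:ℤ)*((n:ℤ)-1)*(2*(n:ℤ)-1)))
        - (12*(6*(n:ℤ)-3)*t + 6*(4*(n:ℤ)-8)*((t:ℤ)*((t:ℤ)-1)) - 8*((t:ℤ)*((t:ℤ)-1)*(2*(t:ℤ)-1))) := by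
    rw [hc4]
    have hdiff : ∑ k ∈ Ico t n, (2*(k:ℤ)+3) * (2*(n:ℤ)-1-2*(k:ℤ))
        = ∑ k ∈ range n, (2*(k:ℤ)+3) * (2*(n:ℤ)-1-2*(k:ℤ))
          - ∑ k ∈ range t, (2*(k:ℤ)+3) * (2*(n:ℤ)-1-2*(k:ℤ)) := by
      have h := hsplit (fun k => (2*(k:ℤ)+3) * (2*(n:ℤ)-1-2*(k:ℤ))); linarith
    rw [hdiff]
    have h1 := hT2gen n; have h2 := hT2gen t
    linarith
  rw [hsplit (fun k => min (a:ℤ) (2*(n:ℤ)-1-2*(k:ℤ))),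
      hsplit (fun k => (2*(k:ℤ)+3) * min (a:ℤ) (2*(n:ℤ)-1-2*(k:ℤ)))]
  rw [hS1, hS2, hT1]
  have hae : (a:ℤ) + 2*(t:ℤ) + (e:ℤ) = 2*(n:ℤ)+1 := by exact_mod_cast htea
  have hs0 : (0:ℤ) ≤ (n:ℤ) - t := by
    have h : (t:ℤ) ≤ (n:ℤ) := by exact_mod_cast htn
    linarith
  have ht0 : (0:ℤ) ≤ (t:ℤ) := Int.natCast_nonneg t
  set S := ∑ k ∈ Ico t n, (2*(k:ℤ)+3) * min (a:ℤ) (2*(n:ℤ)-1-2*(k:ℤ)) with hSdef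
  have key12 : 0 ≤ 12 * ((a:ℤ) * (↑a + (↑t * ↑a + ((n:ℤ) - ↑t) ^ 2) + 1 - ((n:ℤ) + 1) ^ 2)
      + ((a:ℤ) * ((t:ℤ)^2+2*t) + S)) := by
    have hval : 12 * ((a:ℤ) * (↑a + (↑t * ↑a + ((n:ℤ) - ↑t) ^ 2) + 1 - ((n:ℤ) + 1) ^ 2)
        + ((a:ℤ) * ((t:ℤ)^2+2*t) + S))
        = 12*(a:ℤ) * (↑a + (↑t * ↑a + ((n:ℤ) - ↑t) ^ 2) + 1 - ((n:ℤ) + 1) ^ 2)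
          + 12*(a:ℤ) * ((t:ℤ)^2+2*t)
          + ((12*(6*(n:ℤ)-3)*n + 6*(4*(n:ℤ)-8)*((n:ℤ)*((n:ℤ)-1)) - 8*((n:ℤ)*((n:ℤ)-1)*(2*(n:ℤ)-1)))
            - (12*(6*(n:ℤ)-3)*t + 6*(4*(n:ℤ)-8)*((t:ℤ)*((t:ℤ)-1)) - 8*((t:ℤ)*((t:ℤ)-1)*(2*(t:ℤ)-1)))) := by
      linear_combination hT2
    rw [hval]
    have hesplit : e = 0 ∨ e = 1 := by omega
    rcases hesplit with h0 | h1
    · have hE : (e:ℤ) = 0 := by exact_mod_cast h0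
      have haa : (a:ℤ) = 2*(n:ℤ)+1-2*(t:ℤ) := by rw [hE] at hae; linarith
      rw [haa]
      nlinarith [mul_nonneg hs0 ht0, mul_nonneg (mul_nonneg hs0 hs0) ht0,
        mul_nonneg (mul_nonneg hs0 hs0) hs0, mul_nonneg hs0 hs0]
    · have hE : (e:ℤ) = 1 := by exact_mod_cast h1
      have haa : (a:ℤ) = 2*(n:ℤ)-2*(t:ℤ) := by rw [hE] at hae; linarith
      rw [haa]
      nlinarith [mul_nonneg hs0 ht0, mul_nonneg (mul_nonneg hs0 hs0) ht0,
        mul_nonneg (mul_nonneg hs0 hs0) hs0, mul_nonneg hs0 hs0]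
  linarith


/-- Positivity of Psi: the heart of the maximality argument. -/
lemma Psi_pos : ∀ n : ℕ, 1 ≤ n → ∀ u : ℕ → ℕ,
    (∀ k, k < n → u k ≤ 2*n-1-2*k) →
    (∀ k, k+1 < n → u (k+1) = 2*n-3-2*k ∨ u k ≤ u (k+1)) →
    (∃ k, k < n ∧ 0 < u k) → 0 < Psi n u := by
  intro n hn
  induction n, hn using Nat.le_induction with
  | base =>
    intro u hcap _ hex
    obtain ⟨k, hk, hk0⟩ := hex
    interval_cases k
    · have h1 : u 0 ≤ 1 := by have := hcap 0 (by norm_num); omega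
      have h2 : u 0 = 1 := by omega
      unfold Psi suf
      simp [h2]
  | succ n hn ih =>
    intro u hcap hchain hex
    rw [Psi_decomp]
    set u' : ℕ → ℕ := fun k => u (k+1) with hu'
    have hcap' : ∀ k, k < n → u' k ≤ 2*n-1-2*k := by
      intro k hk
      have := hcap (k+1) (by omega)
      simp only [hu']
      omega
    have hchain' : ∀ k, k+1 < n → u' (k+1) = 2*n-3-2*k ∨ u' k ≤ u' (k+1) := by
      intro k hk
      have := hchain (k+1) (by omega)
      simp only [hu']
      omega
    by_cases ha : u 0 = 0
    · -- first row of complement empty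
      have hex' : ∃ k, k < n ∧ 0 < u' k := by
        obtain ⟨k, hk, hk0⟩ := hex
        match k, hk0 with
        | 0, hk0 => omega
        | (k+1), hk0 => exact ⟨k, by omega, hk0⟩
      have hpos := ih u' hcap' hchain' hex'
      have h1 : (0:ℤ) ≤ ∑ k ∈ range n, (2*(k:ℤ)+3) * (u (k+1)) := by
        apply Finset.sum_nonneg
        intro k _
        positivity
      simp only [ha]
      push_cast
      simp only [hu'] at hpos
      linarith
    · -- u 0 = a ≥ 1
      set a := u 0 with hadef
      have ha1 : 1 ≤ a := by omega
      have ha2 : a ≤ 2*n+1 := by have := hcap 0 (by omega); omega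
      -- chain at 0 gives u 1 ≥ min a (2n-1)
      have hu1 : 0 < u' 0 := by
        have h := hchain 0 (by omega)
        simp only [hu']
        omega
      have hpos := ih u' hcap' hchain' ⟨0, by omega, hu1⟩
      -- lower bounds on u (k+1)
      have hmins : ∀ k, k < n → min (a:ℤ) (2*(n:ℤ)-1-2*(k:ℤ)) ≤ (u (k+1) : ℤ) := by
        intro k hk
        induction k with
        | zero =>
          have h := hchain 0 (by omega)
          omega
        | succ k ihk =>
          have hk' : k < n := by omega
          have h := hchain (k+1) (by omega)
          have hik := ihk hk'
          omega
      -- bound the two sums from below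
      have hV : ∑ k ∈ range n, (min (a:ℤ) (2*(n:ℤ)-1-2*(k:ℤ))) ≤ ∑ k ∈ range n, (u (k+1):ℤ) := by
        apply Finset.sum_le_sum
        intro k hk
        exact hmins k (mem_range.mp hk)
      have hW : ∑ k ∈ range n, (2*(k:ℤ)+3) * (min (a:ℤ) (2*(n:ℤ)-1-2*(k:ℤ)))
          ≤ ∑ k ∈ range n, (2*(k:ℤ)+3) * (u (k+1):ℤ) := by
        apply Finset.sum_le_sum
        intro k hk
        have h1 : (0:ℤ) ≤ 2*(k:ℤ)+3 := by positivity
        exact mul_le_mul_of_nonneg_left (hmins k (mem_range.mp hk)) h1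
      have hstep := ineq_step n a ha1 ha2
      have ha0 : (0:ℤ) ≤ (a:ℤ) := Int.natCast_nonneg a
      have hterm1 : (a:ℤ) * ((a:ℤ) + (∑ k ∈ range n, (min (a:ℤ) (2*(n:ℤ)-1-2*(k:ℤ)))) + 1 - ((n:ℤ)+1)^2)
          ≤ (a:ℤ) * ((a:ℤ) + (∑ k ∈ range n, (u (k+1):ℤ)) + 1 - ((n:ℤ)+1)^2) := by
        apply mul_le_mul_of_nonneg_left _ ha0
        linarith
      simp only [hu'] at hpos
      push_cast
      linarith
  

open NatPartition

/-- abbreviations -/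
def lam (l : NatPartition) (i : ℕ) : ℕ := l.parts.getD i 0
def len (l : NatPartition) : ℕ := l.parts.length
def cnt (l : NatPartition) (j : ℕ) : ℕ := l.parts.countP (fun a => decide (j < a))
/-- first-column hook lengths -/
def bfun (l : NatPartition) (i : ℕ) : ℕ := lam l i + (len l - 1 - i)

variable {l : NatPartition}

lemma lam_pos {i : ℕ} (hi : i < len l) : 0 < lam l i := by
  have h : l.parts.getD i 0 = l.parts.get ⟨i, hi⟩ := List.getD_eq_getElem l.parts 0 hi
  unfold lam
  rw [h]
  exact l.pos _ (List.get_mem l.parts _)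

lemma lam_anti {i j : ℕ} (hij : i ≤ j) (hj : j < len l) : lam l j ≤ lam l i := by
  rcases Nat.eq_or_lt_of_le hij with h | h
  · subst h; exact le_refl _
  · have hi : i < len l := lt_trans h hj
    have h1 : l.parts.getD i 0 = l.parts.get ⟨i, hi⟩ := List.getD_eq_getElem l.parts 0 hi
    have h2 : l.parts.getD j 0 = l.parts.get ⟨j, hj⟩ := List.getD_eq_getElem l.parts 0 hj
    unfold lam
    rw [h1, h2]
    exact List.pairwise_iff_get.mp l.sorted ⟨i, hi⟩ ⟨j, hj⟩ h

lemma cnt_zero : cnt l 0 = len l := by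
  unfold cnt len
  rw [List.countP_eq_length]
  intro a ha
  simpa using l.pos a ha

lemma cnt_le_len (j : ℕ) : cnt l j ≤ len l := List.countP_le_length

lemma cnt_anti {j j' : ℕ} (h : j ≤ j') : cnt l j' ≤ cnt l j := by
  apply List.countP_mono_left
  intro a _ ha
  simp only [decide_eq_true_eq] at *
  omega

/-- characterization: `j < λ_m ↔ m < cnt j`, for sorted lists -/
lemma countP_char : ∀ (li : List ℕ), li.Pairwise (· ≥ ·) → ∀ (j m : ℕ), m < li.length →
    (j < li.getD m 0 ↔ m < li.countP (fun a => decide (j < a))) := by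
  intro li
  induction li with
  | nil => intro _ j m hm; simp at hm
  | cons x xs ih =>
    intro hs j m hm
    have hs' : xs.Pairwise (· ≥ ·) := (List.pairwise_cons.mp hs).2
    have hhead : ∀ a ∈ xs, a ≤ x := (List.pairwise_cons.mp hs).1
    rw [List.countP_cons]
    match m with
    | 0 =>
      simp only [List.getD_cons_zero]
      constructor
      · intro hj
        have : decide (j < x) = true := by simpa using hj
        simp [this]
      · intro hc
        by_contra hj
        push_neg at hj
        have h0 : decide (j < x) = false := by simpa using hj
        rw [h0] at hc
        simp only [Bool.false_eq_true, if_false, add_zero] at hc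
        have : xs.countP (fun a => decide (j < a)) = 0 := by
          apply List.countP_eq_zero.mpr
          intro a ha
          have := hhead a ha
          simp only [decide_eq_true_eq]
          omega
        omega
    | m+1 =>
      simp only [List.getD_cons_succ]
      have hm' : m < xs.length := by simpa using hm
      rw [ih hs' j m hm']
      by_cases hjx : j < x
      · have : decide (j < x) = true := by simpa using hjx
        simp [this]
      · have h0 : decide (j < x) = false := by simpa using hjx
        rw [h0]
        simp only [Bool.false_eq_true, if_false, add_zero]
        have : xs.countP (fun a => decide (j < a)) = 0 := by
          apply List.countP_eq_zero.mpr
          intro a ha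
          have := hhead a ha
          simp only [decide_eq_true_eq]
          omega
        omega

lemma cnt_char {j m : ℕ} (hm : m < len l) : j < lam l m ↔ m < cnt l j :=
  countP_char l.parts l.sorted j m hm

/-- the hook length identity -/
lemma hook_eq {i j : ℕ} (hi : i < len l) (hj : j < lam l i) :
    l.hook i j + (i + j + 1) = lam l i + cnt l j := by
  have hic : i < cnt l j := (cnt_char hi).mp hj
  show l.parts.getD i 0 - j + l.parts.countP (fun a => decide (j < a)) - i - 1 + (i + j + 1) = _
  have h1 : l.parts.getD i 0 = lam l i := rfl
  have h2 : l.parts.countP (fun a => decide (j < a)) = cnt l j := rfl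
  rw [h1, h2]
  omega

lemma bfun_eq {i : ℕ} (hi : i < len l) : bfun l i + (i + 1) = lam l i + len l := by
  unfold bfun
  omega

lemma hook_col {i : ℕ} (hi : i < len l) : l.hook i 0 = bfun l i := by
  have h1 := hook_eq hi (lam_pos hi)
  have h2 := bfun_eq hi
  have h3 : cnt l 0 = len l := cnt_zero
  omega

lemma bfun_strict_anti {i i' : ℕ} (h : i < i') (hi' : i' < len l) : bfun l i' < bfun l i := by
  have h1 := lam_anti (le_of_lt h) hi'
  have h2 : 0 < lam l i' := lam_pos hi'
  unfold bfun
  omega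

/-- the value `j + (L - cnt j)` is never a first-column hook -/
lemma c_not_beta (j : ℕ) {m : ℕ} (hm : m < len l) : bfun l m ≠ j + (len l - cnt l j) := by
  have hb := bfun_eq hm
  have hcle := cnt_le_len (l := l) j
  by_cases hc : j < lam l m
  · have h1 : m < cnt l j := (cnt_char hm).mp hc
    omega
  · have h1 : ¬ m < cnt l j := fun hcon => hc ((cnt_char hm).mpr hcon)
    push_neg at hc h1
    omega

/-- surjectivity: any non-beta value is of the form `j + (L - cnt j)` -/
lemma c_surj {x : ℕ} (hx : ∀ m, m < len l → bfun l m ≠ x) :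
    ∃ j, j + (len l - cnt l j) = x := by
  set c : ℕ → ℕ := fun j => j + (len l - cnt l j) with hc
  have hc0 : c 0 = 0 := by simp [hc, cnt_zero]
  have hmono : StrictMono c := by
    apply strictMono_nat_of_lt_succ
    intro j
    have h1 : cnt l (j+1) ≤ cnt l j := cnt_anti (by omega)
    have h2 := cnt_le_len (l := l) j
    simp only [hc]
    omega
  have hcj : ∀ j, j ≤ c j := fun j => hmono.le_apply
  set j := Nat.findGreatest (fun j => c j ≤ x) x with hj
  have hjle : c j ≤ x :=
    Nat.findGreatest_spec (P := fun j => c j ≤ x) (m := 0) (Nat.zero_le x) (by simp [hc0])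
  rcases Nat.eq_or_lt_of_le hjle with heq | hlt
  · exact ⟨j, heq⟩
  · exfalso
    have hjx : c (j+1) > x := by
      by_cases hjx1 : j + 1 ≤ x
      · by_contra hcon
        push_neg at hcon
        have := Nat.findGreatest_is_greatest (n := x) (P := fun j => c j ≤ x)
          (by omega : j < j + 1) hjx1
        exact this hcon
      · have : x ≤ j := by omega
        have := hcj j
        omega
    -- now c j < x < c (j+1), derive x ∈ beta set
    set m := j + len l - x with hm
    have hcltL : cnt l (j+1) ≤ cnt l j := cnt_anti (by omega)
    have hcle := cnt_le_len (l := l) j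
    have hcle1 := cnt_le_len (l := l) (j+1)
    have hxle : x ≤ j + len l := by
      simp only [hc] at hjx
      omega
    have hmlt : m < cnt l j := by
      simp only [hc] at hlt
      omega
    have hmL : m < len l := by omega
    have hjlam : j < lam l m := (cnt_char hmL).mpr hmlt
    have hmge : cnt l (j+1) ≤ m := by
      simp only [hc] at hjx
      omega
    have hlam2 : ¬ (j + 1 < lam l m) := by
      intro hcon
      have := (cnt_char hmL).mp hcon
      omega
    have hlameq : lam l m = j + 1 := by omega
    have hb := bfun_eq hmL
    have : bfun l m = x := by omega
    exact hx m hmL this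

/-- A core's beta set is closed under subtracting t -/
lemma core_closure (hc : l.IsCore t) (ht : 0 < t) {i : ℕ} (hi : i < len l)
    (hti : t ≤ bfun l i) : ∃ i', i' < len l ∧ bfun l i' = bfun l i - t := by
  by_contra hcon
  push_neg at hcon
  set x := bfun l i - t with hx
  have hxne : ∀ m, m < len l → bfun l m ≠ x := fun m hm => hcon m hm
  obtain ⟨j, hjx⟩ := c_surj hxne
  -- j < lam i
  have hcle := cnt_le_len (l := l) j
  have hb := bfun_eq hi
  have hjlam : j < lam l i := by
    by_contra hjc
    push_neg at hjc
    have h1 : ¬ (i < cnt l j) := fun hcon2 => absurd ((cnt_char hi).mpr hcon2) (by omega)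
    push_neg at h1
    omega
  have hhook := hook_eq hi hjlam
  have hic : i < cnt l j := (cnt_char hi).mp hjlam
  have hhv : l.hook i j = t := by omega
  exact hc i j ⟨hi, hjlam⟩ (by rw [hhv])

/-- converse: closure of the beta set implies core -/
lemma closure_core (ht : 0 < t)
    (hclo : ∀ i, i < len l → t ≤ bfun l i → ∃ i', i' < len l ∧ bfun l i' = bfun l i - t) :
    l.IsCore t := by
  intro i j hdiag hdvd
  obtain ⟨hi, hj⟩ := hdiag
  have hi' : i < len l := hi
  have hj' : j < lam l i := hj
  have hhook := hook_eq hi' hj'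
  have hic : i < cnt l j := (cnt_char hi').mp hj'
  have hcle := cnt_le_len (l := l) j
  have hb := bfun_eq hi'
  have hpos : 0 < l.hook i j := by omega
  obtain ⟨k, hk⟩ := hdvd
  have hk1 : 1 ≤ k := by
    rcases Nat.eq_zero_or_pos k with h | h
    · rw [h, mul_zero] at hk; omega
    · exact h
  -- beta i - hook = c j
  have hcj : bfun l i = l.hook i j + (j + (len l - cnt l j)) := by omega
  -- descend k steps
  have haux : ∀ m, m ≤ k → ∃ i', i' < len l ∧ bfun l i' = bfun l i - t * m := by
    intro m
    induction m with
    | zero => intro _; exact ⟨i, hi', by simp⟩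
    | succ m ihm =>
      intro hmk
      obtain ⟨i', hi'2, hbi'⟩ := ihm (by omega)
      have hmul : t * (m+1) = t * m + t := by ring
      have hle2 : t * (m+1) ≤ t * k := Nat.mul_le_mul_left t hmk
      have htle : t ≤ bfun l i' := by omega
      obtain ⟨i'', hi''2, hbi''⟩ := hclo i' hi'2 htle
      refine ⟨i'', hi''2, ?_⟩
      rw [hbi'', hbi']
      omega
  obtain ⟨i', hi'2, hbi'⟩ := haux k (le_refl k)
  have : bfun l i' = j + (len l - cnt l j) := by
    rw [hbi']
    omega
  exact c_not_beta j hi'2 this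

/-- sum of first-column hooks -/
lemma sum_bfun : 2 * ∑ i ∈ range (len l), bfun l i = 2 * l.size + len l * (len l - 1) := by
  have h1 : ∑ i ∈ range (len l), bfun l i
      = ∑ i ∈ range (len l), lam l i + ∑ i ∈ range (len l), (len l - 1 - i) := by
    rw [← Finset.sum_add_distrib]
    apply Finset.sum_congr rfl
    intro i _
    rfl
  have h2 : ∑ i ∈ range (len l), lam l i = l.size := by
    unfold size
    conv_rhs => rw [← List.ofFn_get l.parts]
    rw [List.sum_ofFn]
    rw [← Fin.sum_univ_eq_sum_range (fun i => lam l i) (len l)]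
    apply Finset.sum_congr rfl
    intro i _
    unfold lam
    rw [List.getD_eq_getElem l.parts 0 i.isLt]
    rfl
  have h3 : ∑ i ∈ range (len l), (len l - 1 - i) = ∑ i ∈ range (len l), i := by
    rw [← Finset.sum_range_reflect]
    apply Finset.sum_congr rfl
    intro i hi
    rw [mem_range] at hi
    omega
  have h4 : 2 * ∑ i ∈ range (len l), i = len l * (len l - 1) :=
    Finset.sum_range_id_mul_two (len l) ▸ by rw [mul_comm]
  omega


/-! ### Building a partition from a finite set of positive integers -/

section Construct

variable (S : Finset ℕ)

/-- descending enumeration of S -/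
def senum (i : ℕ) : ℕ := (S.sort (· ≤ ·)).getD (S.card - 1 - i) 0

lemma senum_desc {i j : ℕ} (hij : i < j) (hj : j < S.card) : senum S j < senum S i := by
  have hlen : (S.sort (· ≤ ·)).length = S.card := Finset.length_sort _
  have hi : i < S.card := lt_trans hij hj
  have h1 : S.card - 1 - j < (S.sort (· ≤ ·)).length := by omega
  have h2 : S.card - 1 - i < (S.sort (· ≤ ·)).length := by omega
  unfold senum
  rw [List.getD_eq_getElem _ 0 h1, List.getD_eq_getElem _ 0 h2]
  have := List.pairwise_iff_get.mp (Finset.sortedLT_sort S).pairwise ⟨S.card - 1 - j, h1⟩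
    ⟨S.card - 1 - i, h2⟩ (by simp; omega)
  simpa using this

lemma senum_mem {i : ℕ} (hi : i < S.card) : senum S i ∈ S := by
  have hlen : (S.sort (· ≤ ·)).length = S.card := Finset.length_sort _
  have h1 : S.card - 1 - i < (S.sort (· ≤ ·)).length := by omega
  unfold senum
  rw [List.getD_eq_getElem _ 0 h1]
  rw [← Finset.mem_sort (· ≤ ·)]
  exact List.getElem_mem _

lemma senum_gap : ∀ (d i : ℕ), i + d < S.card → senum S (i + d) + d ≤ senum S i := by
  intro d
  induction d with
  | zero => intro i _; simp
  | succ d ih =>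
    intro i hi
    have h1 := ih i (by omega)
    have h2 : senum S (i + (d+1)) < senum S (i + d) := senum_desc S (by omega) (by omega : i + (d+1) < S.card)
    omega

lemma senum_pos (hS : ∀ x ∈ S, 0 < x) {i : ℕ} (hi : i < S.card) : S.card - i ≤ senum S i := by
  have hlast : 0 < senum S (S.card - 1) := hS _ (senum_mem S (by omega))
  have hgap := senum_gap S (S.card - 1 - i) i (by omega)
  have h3 : i + (S.card - 1 - i) = S.card - 1 := by omega
  rw [h3] at hgap
  omega

/-- the partition whose beta set is S -/
def pOf (hS : ∀ x ∈ S, 0 < x) : NatPartition where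
  parts := List.ofFn (fun i : Fin S.card => senum S i - (S.card - 1 - i))
  sorted := by
    rw [List.pairwise_ofFn]
    intro i j hij
    show senum S j - (S.card - 1 - j) ≤ senum S i - (S.card - 1 - i)
    have h1 := senum_gap S ((j:ℕ) - i) i (by omega)
    have h3 : (i:ℕ) + ((j:ℕ) - i) = (j:ℕ) := by
      have : (i:ℕ) < j := hij
      omega
    rw [h3] at h1
    have h2 := senum_pos S hS (j.isLt)
    omega
  pos := by
    intro x hx
    rw [List.mem_ofFn] at hx
    obtain ⟨i, hi⟩ := hx
    have hi' : senum S ↑i - (S.card - 1 - ↑i) = x := hi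
    have h2 := senum_pos S hS (i.isLt)
    omega

variable (hS : ∀ x ∈ S, 0 < x)

lemma pOf_len : len (pOf S hS) = S.card := by
  unfold len pOf
  simp

lemma pOf_lam {i : ℕ} (hi : i < S.card) : lam (pOf S hS) i = senum S i - (S.card - 1 - i) := by
  unfold lam pOf
  simp only
  rw [List.getD_eq_getElem _ 0 (by simpa using hi)]
  simp

lemma pOf_bfun {i : ℕ} (hi : i < S.card) : bfun (pOf S hS) i = senum S i := by
  unfold bfun
  rw [pOf_lam S hS hi, pOf_len S hS]
  have := senum_pos S hS hi
  omega

lemma pOf_image : (range (len (pOf S hS))).image (bfun (pOf S hS)) = S := by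
  rw [pOf_len S hS]
  apply Finset.eq_of_subset_of_card_le
  · intro x hx
    rw [Finset.mem_image] at hx
    obtain ⟨i, hi, hix⟩ := hx
    rw [mem_range] at hi
    rw [pOf_bfun S hS hi] at hix
    rw [← hix]
    exact senum_mem S hi
  · apply le_trans (le_of_eq (Finset.card_range S.card).symm)
    apply Finset.card_le_card_of_injOn (fun i => bfun (pOf S hS) i)
    · intro i hi
      rw [Finset.mem_coe, Finset.mem_image]
      exact ⟨i, hi, rfl⟩
    · intro i hi j hj hij
      rw [Finset.mem_coe, mem_range] at hi hj
      by_contra hne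
      rcases Nat.lt_or_ge i j with h | h
      · have := bfun_strict_anti (l := pOf S hS) h (by rw [pOf_len S hS]; exact hj)
        simp only at hij
        omega
      · have h' : j < i := by omega
        have := bfun_strict_anti (l := pOf S hS) h' (by rw [pOf_len S hS]; exact hi)
        simp only at hij
        omega

end Construct

/-- two partitions with the same beta set are equal -/
lemma eq_of_bimage_eq (l l' : NatPartition)
    (h : (range (len l)).image (bfun l) = (range (len l')).image (bfun l')) : l = l' := by
  haveI : IsAntisymm ℕ (· > ·) := ⟨fun a b h1 h2 => absurd h1 (not_lt.mpr (le_of_lt h2))⟩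
  have hinj : ∀ (p : NatPartition), Set.InjOn (bfun p) (range (len p)) := by
    intro p i hi j hj hij
    rw [Finset.coe_range, Set.mem_Iio] at hi hj
    by_contra hne
    rcases Nat.lt_or_ge i j with hlt | hge
    · have := bfun_strict_anti (l := p) hlt hj; omega
    · have hlt : j < i := by omega
      have := bfun_strict_anti (l := p) hlt hi; omega
  have hcard : len l = len l' := by
    have h1 := Finset.card_image_of_injOn (hinj l)
    have h2 := Finset.card_image_of_injOn (hinj l')
    rw [h] at h1
    rw [Finset.card_range] at h1 h2
    omega
  set A := List.ofFn (fun i : Fin (len l) => bfun l i) with hA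
  set A' := List.ofFn (fun i : Fin (len l') => bfun l' i) with hA'
  have hsorted : ∀ (p : NatPartition), (List.ofFn (fun i : Fin (len p) => bfun p i)).Pairwise (· > ·) := by
    intro p
    rw [List.pairwise_ofFn]
    intro i j hij
    exact bfun_strict_anti hij j.isLt
  have hnodup : ∀ (p : NatPartition), (List.ofFn (fun i : Fin (len p) => bfun p i)).Nodup :=
    fun p => (hsorted p).nodup
  have htofin : ∀ (p : NatPartition),
      (List.ofFn (fun i : Fin (len p) => bfun p i)).toFinset = (range (len p)).image (bfun p) := by
    intro p
    ext x
    simp only [List.mem_toFinset, List.mem_ofFn, Finset.mem_image, mem_range]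
    constructor
    · rintro ⟨i, hi⟩; exact ⟨i, i.isLt, hi⟩
    · rintro ⟨i, hi, hix⟩; exact ⟨⟨i, hi⟩, hix⟩
  have hperm : A.Perm A' := by
    apply List.perm_of_nodup_nodup_toFinset_eq (hnodup l) (hnodup l')
    rw [htofin l, htofin l', h]
  have hAA : A = A' := List.Perm.eq_of_pairwise (fun a b _ _ h1 h2 => by omega) (hsorted l) (hsorted l') hperm
  have hbeq : ∀ i, i < len l → bfun l i = bfun l' i := by
    intro i hi
    have hlA : i < A.length := by simp [hA]; exact hi
    have hlA' : i < A'.length := by simp [hA']; omega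
    have h1 : A[i]'hlA = bfun l i := by simp [hA]
    have h2 : A'[i]'hlA' = bfun l' i := by simp [hA']
    rw [← h1, ← h2]
    simp only [hAA]
  have hparts : l.parts = l'.parts := by
    apply List.ext_getElem (by exact hcard)
    intro i h1 h2
    have hi : i < len l := h1
    have hlam : lam l i = lam l' i := by
      have e1 := bfun_eq (l := l) hi
      have e2 := bfun_eq (l := l') (hcard ▸ hi)
      have e3 := hbeq i hi
      omega
    have g1 : l.parts[i] = lam l i := (List.getD_eq_getElem l.parts 0 h1).symm
    have g2 : l'.parts[i] = lam l' i := (List.getD_eq_getElem l'.parts 0 h2).symm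
    exact g1.trans (hlam.trans g2.symm)
  obtain ⟨p1, s1, q1⟩ := l
  obtain ⟨p2, s2, q2⟩ := l'
  simp only at hparts
  subst hparts
  rfl


/-! ### The set of gaps of the numerical semigroup generated by 2n, 2n+1, 2n+2 -/

def rowI (n k : ℕ) : Finset ℕ := Finset.Ico (2*n*k+2*k+1) (2*n*k+2*n)

def Gset (n : ℕ) : Finset ℕ := (range n).biUnion (rowI n)

lemma mem_Gset {n x : ℕ} : x ∈ Gset n ↔ ∃ k, k < n ∧ (2*n*k+2*k+1 ≤ x ∧ x < 2*n*k+2*n) := by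
  unfold Gset rowI
  simp [Finset.mem_biUnion, Finset.mem_Ico]

lemma Gset_pos {n x : ℕ} (hx : x ∈ Gset n) : 0 < x := by
  obtain ⟨k, _, h1, _⟩ := mem_Gset.mp hx
  omega

lemma rowI_disj {n : ℕ} : ∀ (k : ℕ), k ∈ range n → ∀ (k' : ℕ), k' ∈ range n → k ≠ k' →
    Disjoint (rowI n k) (rowI n k') := by
  have key : ∀ k k' : ℕ, k < k' → Disjoint (rowI n k) (rowI n k') := by
    intro k k' hkk
    rw [Finset.disjoint_left]
    intro x hx hx'
    unfold rowI at hx hx'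
    rw [Finset.mem_Ico] at hx hx'
    have hmul : 2*n*(k+1) ≤ 2*n*k' := Nat.mul_le_mul_left _ (by omega)
    have hexp : 2*n*(k+1) = 2*n*k + 2*n := by ring
    omega
  intro k _ k' _ hne
  rcases Nat.lt_or_ge k k' with h | h
  · exact key k k' h
  · exact (key k' k (by omega)).symm

lemma card_rowI {n k : ℕ} (hk : k < n) : (rowI n k).card = 2*n-1-2*k := by
  unfold rowI
  rw [Nat.card_Ico]
  omega

lemma cast_sub_row {n k : ℕ} (hk : k < n) : ((2*n-1-2*k : ℕ) : ℤ) = 2*(n:ℤ)-1-2*(k:ℤ) := by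
  have h1 : 2*k+1 ≤ 2*n := by omega
  push_cast [Nat.cast_sub (by omega : 2*k ≤ 2*n-1), Nat.cast_sub (by omega : 1 ≤ 2*n)]
  ring

lemma card_Gset {n : ℕ} : (Gset n).card = n*n := by
  unfold Gset
  rw [Finset.card_biUnion rowI_disj]
  have h1 : ∀ k ∈ range n, (rowI n k).card = 2*n-1-2*k := fun k hk => card_rowI (mem_range.mp hk)
  rw [Finset.sum_congr rfl h1]
  have h2 : ((∑ k ∈ range n, (2*n-1-2*k) : ℕ) : ℤ) = ∑ k ∈ range n, ((2*n-1-2*k : ℕ) : ℤ) :=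
    Nat.cast_sum _ _
  have h3 : ∑ k ∈ range n, ((2*n-1-2*k : ℕ) : ℤ) = ∑ k ∈ range n, (2*(n:ℤ)-1-2*(k:ℤ)) :=
    Finset.sum_congr rfl (fun k hk => cast_sub_row (mem_range.mp hk))
  have h4 : ∑ k ∈ range n, (2*(n:ℤ)-1-2*(k:ℤ)) = (n:ℤ)*(2*(n:ℤ)-(n:ℤ)) := by
    have hp := psum_poly n (2*(n:ℤ)-1) (-2) 0 0
    have hexp : ∑ k ∈ range n, (2*(n:ℤ)-1-2*(k:ℤ))
        = ∑ k ∈ range n, ((2*(n:ℤ)-1) + (-2)*k + 0*(k:ℤ)^2 + 0*(k:ℤ)^3) := by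
      apply Finset.sum_congr rfl; intro k _; ring
    rw [hexp]; linarith
  have : ((∑ k ∈ range n, (2*n-1-2*k) : ℕ) : ℤ) = ((n*n : ℕ) : ℤ) := by
    rw [h2, h3, h4]; push_cast; ring
  exact_mod_cast this

lemma sum_Gset {n : ℕ} : 144 * ∑ x ∈ Gset n, (x:ℤ) = 96*(n:ℤ)^4 + 48*(n:ℤ)^3 - 24*(n:ℤ)^2 + 24*(n:ℤ) := by
  unfold Gset
  rw [Finset.sum_biUnion rowI_disj]
  have hrange : ∀ m : ℕ, 2 * ∑ x ∈ range m, (x:ℤ) = (m:ℤ)*((m:ℤ)-1) := psum1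
  have hsum : ∀ k ∈ range n, 12 * ∑ x ∈ rowI n k, (x:ℤ)
      = ((24*(n:ℤ)^2-12*(n:ℤ)) + (48*(n:ℤ)^2-24*(n:ℤ)-12)*k + (-48*(n:ℤ)-24)*(k:ℤ)^2 + 0*(k:ℤ)^3) := by
    intro k hk
    unfold rowI
    have hab : 2*n*k+2*k+1 ≤ 2*n*k+2*n := by
      rw [mem_range] at hk; omega
    have hsplit : ∑ x ∈ range (2*n*k+2*n), (x:ℤ)
        = ∑ x ∈ range (2*n*k+2*k+1), (x:ℤ) + ∑ x ∈ Ico (2*n*k+2*k+1) (2*n*k+2*n), (x:ℤ) := by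
      have h := Finset.sum_Ico_consecutive (fun x => (x:ℤ)) (Nat.zero_le (2*n*k+2*k+1)) hab
      simpa [← range_eq_Ico] using h.symm
    have h1 := hrange (2*n*k+2*n)
    have h2 := hrange (2*n*k+2*k+1)
    push_cast at h1 h2 hsplit ⊢
    linear_combination 6*h1 - 6*h2 - 12*hsplit
  have e2 : ∑ k ∈ range n, (12 * ∑ x ∈ rowI n k, (x:ℤ))
      = ∑ k ∈ range n, ((24*(n:ℤ)^2-12*(n:ℤ)) + (48*(n:ℤ)^2-24*(n:ℤ)-12)*k + (-48*(n:ℤ)-24)*(k:ℤ)^2 + 0*(k:ℤ)^3) :=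
    Finset.sum_congr rfl hsum
  have e4 := psum_poly n (24*(n:ℤ)^2-12*(n:ℤ)) (48*(n:ℤ)^2-24*(n:ℤ)-12) (-48*(n:ℤ)-24) 0
  have e3 : 144 * ∑ k ∈ range n, ∑ x ∈ rowI n k, (x:ℤ)
      = 12 * ∑ k ∈ range n, (12 * ∑ x ∈ rowI n k, (x:ℤ)) := by
    rw [Finset.mul_sum, Finset.mul_sum]
    apply Finset.sum_congr rfl
    intro k _
    ring
  rw [e3, e2]
  linear_combination e4

/-- membership via div/mod -/
lemma mem_Gset_divmod {n x : ℕ} (hn : 1 ≤ n) :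
    x ∈ Gset n ↔ (2*(x/(2*n)) < x % (2*n) ∧ x / (2*n) < n) := by
  have h2n : 0 < 2*n := by omega
  constructor
  · intro hx
    obtain ⟨k, hk, h1, h2⟩ := mem_Gset.mp hx
    have hdiv : x / (2*n) = k := by
      apply Nat.div_eq_of_lt_le
      · calc k * (2*n) = 2*n*k := by ring
          _ ≤ x := by omega
      · calc x < 2*n*k+2*n := h2
          _ = (k+1)*(2*n) := by ring
    have hmod := Nat.mod_add_div x (2*n)
    rw [hdiv] at hmod ⊢
    constructor
    · omega
    · exact hk
  · rintro ⟨h1, h2⟩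
    set k := x / (2*n) with hk
    set r := x % (2*n) with hr
    have hdm : 2*n*k + r = x := Nat.div_add_mod x (2*n)
    have hrlt : r < 2*n := Nat.mod_lt x h2n
    rw [mem_Gset]
    exact ⟨k, h2, by omega, by omega⟩

/-- closure of the gap set under subtraction of 2n, 2n+1, 2n+2 -/
lemma Gset_closed {n x t : ℕ} (ht1 : 2*n ≤ t) (ht2 : t ≤ 2*n+2)
    (hx : x ∈ Gset n) (htx : t ≤ x) : x - t ∈ Gset n := by
  obtain ⟨k, hk, h1, h2⟩ := mem_Gset.mp hx
  have hk1 : 1 ≤ k := by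
    by_contra hc
    push_neg at hc
    interval_cases k
    omega
  rw [mem_Gset]
  have hexp : 2*n*k = 2*n*(k-1) + 2*n := by
    have hk2 : k - 1 + 1 = k := by omega
    calc 2*n*k = 2*n*((k-1)+1) := by rw [hk2]
      _ = 2*n*(k-1) + 2*n := by ring
  exact ⟨k-1, by omega, by omega, by omega⟩

/-! ### choose arithmetic -/

lemma two_choose (m : ℕ) : 2 * ((m.choose 2 : ℕ) : ℤ) = (m:ℤ)*((m:ℤ)-1) := by
  induction m with
  | zero => simp
  | succ m ih =>
    rw [Nat.choose_succ_succ]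
    push_cast
    rw [Nat.choose_one_right]
    push_cast
    linarith [ih]

lemma six_choose_three (m : ℕ) : 6 * ((m.choose 3 : ℕ) : ℤ) = (m:ℤ)*((m:ℤ)-1)*((m:ℤ)-2) := by
  induction m with
  | zero => simp
  | succ m ih =>
    rw [Nat.choose_succ_succ]
    push_cast
    have h2 := two_choose m
    push_cast at ih h2
    linarith [ih, h2]

/-- the target maximum value -/
lemma M_closed_form (n : ℕ) :
    12 * (((n + 1) * (n + 1).choose 3 + (n + 2).choose 3 : ℕ) : ℤ)
      = 2*(n:ℤ)*((n:ℤ)+1)*((n:ℤ)^2+(n:ℤ)+1) := by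
  have h1 := six_choose_three (n+1)
  have h2 := six_choose_three (n+2)
  push_cast at h1 h2 ⊢
  nlinarith [h1, h2]


/-! ### sum-of-suffix identity and top-sum bound -/

lemma sqsum (u : ℕ → ℕ) : ∀ m : ℕ,
    2 * ∑ k ∈ range m, (u k : ℤ) * suf u k (m - k)
      = (∑ k ∈ range m, (u k : ℤ))^2 + ∑ k ∈ range m, ((u k : ℤ))^2 := by
  intro m
  induction m with
  | zero => simp
  | succ m ih =>
    have hstep : ∀ k ∈ range m, (u k : ℤ) * suf u k (m + 1 - k)
        = (u k : ℤ) * suf u k (m - k) + (u k : ℤ) * (u m : ℤ) := by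
      intro k hk
      rw [mem_range] at hk
      have h1 : m + 1 - k = (m - k) + 1 := by omega
      have h2 : suf u k ((m-k)+1) = suf u k (m-k) + (u (k + (m-k)) : ℤ) := by
        unfold suf
        rw [Finset.sum_range_succ]
      have h3 : k + (m - k) = m := by omega
      rw [h1, h2, h3]
      ring
    rw [Finset.sum_range_succ, Finset.sum_range_succ, Finset.sum_range_succ,
      Finset.sum_congr rfl hstep, Finset.sum_add_distrib]
    have h4 : suf u m (m + 1 - m) = (u m : ℤ) := by
      have : m + 1 - m = 1 := by omega
      rw [this]
      unfold suf
      simp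
    rw [h4]
    have h5 : ∑ k ∈ range m, (u k : ℤ) * (u m : ℤ) = (∑ k ∈ range m, (u k : ℤ)) * (u m : ℤ) := by
      rw [Finset.sum_mul]
    rw [h5]
    linear_combination ih

lemma sum_top : ∀ (N : ℕ) (T : Finset ℕ) (c : ℕ), T.card = N → (∀ x ∈ T, x < c) →
    2 * ∑ x ∈ T, (x:ℤ) ≤ N * (2*(c:ℤ) - N - 1) := by
  intro N
  induction N with
  | zero =>
    intro T c hc _
    rw [Finset.card_eq_zero] at hc
    subst hc
    simp
  | succ N ih =>
    intro T c hcard hT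
    have hne : T.Nonempty := by rw [← Finset.card_pos]; omega
    set m := T.max' hne with hm
    have hmem : m ∈ T := T.max'_mem hne
    have hrest := ih (T.erase m) m (by rw [Finset.card_erase_of_mem hmem]; omega)
      (by
        intro x hx
        have hx1 := Finset.mem_of_mem_erase hx
        have hx2 := Finset.ne_of_mem_erase hx
        have := T.le_max' x hx1
        omega)
    have hsum : ∑ x ∈ T, (x:ℤ) = (m:ℤ) + ∑ x ∈ T.erase m, (x:ℤ) :=
      (Finset.add_sum_erase T _ hmem).symm
    have hmc : m < c := hT m hmem
    have hmc' : (m:ℤ) + 1 ≤ (c:ℤ) := by exact_mod_cast hmc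
    have hN0 : (0:ℤ) ≤ (N:ℤ) := Int.natCast_nonneg N
    push_cast
    rw [hsum]
    nlinarith [hrest, mul_nonneg hN0 (by linarith : (0:ℤ) ≤ (c:ℤ) - 1 - m)]

/-- sum over range n of `(2n-1-2k)` -/
lemma sum_cz (n : ℕ) : ∑ k ∈ range n, (2*(n:ℤ)-1-2*(k:ℤ)) = (n:ℤ)^2 := by
  have hp := psum_poly n (2*(n:ℤ)-1) (-2) 0 0
  have hexp : ∑ k ∈ range n, (2*(n:ℤ)-1-2*(k:ℤ))
      = ∑ k ∈ range n, ((2*(n:ℤ)-1) + (-2)*k + 0*(k:ℤ)^2 + 0*(k:ℤ)^3) := by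
    apply Finset.sum_congr rfl; intro k _; ring
  rw [hexp]; nlinarith [hp]

/-- expansion of Psi in terms of the basic sums -/
lemma Psi_expand (n : ℕ) (u : ℕ → ℕ) :
    Psi n u = (2*(n:ℤ)+2) * (∑ k ∈ range n, (k:ℤ)*(u k:ℤ)) + (1-(n:ℤ)^2) * (∑ k ∈ range n, (u k:ℤ))
      + ∑ k ∈ range n, (u k : ℤ) * suf u k (n - k) := by
  unfold Psi
  have hexp : ∀ k ∈ range n, (u k : ℤ) * ((2*(n:ℤ)+2)*k + 1 - (n:ℤ)^2 + suf u k (n - k))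
      = (2*(n:ℤ)+2) * ((k:ℤ)*(u k:ℤ)) + (1-(n:ℤ)^2) * (u k:ℤ) + (u k : ℤ) * suf u k (n - k) := by
    intro k _; ring
  rw [Finset.sum_congr rfl hexp, Finset.sum_add_distrib, Finset.sum_add_distrib,
    ← Finset.mul_sum, ← Finset.mul_sum]

/-- the main algebraic identity -/
lemma main_identity (n : ℕ) (u h : ℕ → ℕ) (L : ℕ)
    (hv : ∀ k, k < n → (h k : ℤ) = (2*(n:ℤ)-1-2*(k:ℤ)) - (u k : ℤ))
    (hL : (L:ℤ) = ∑ k ∈ range n, (h k : ℤ)) :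
    12 * (∑ k ∈ range n, (4*(n:ℤ)*(k:ℤ)*(h k:ℤ) + (h k:ℤ)*(4*(n:ℤ) - (h k:ℤ) - 1))) - 12 * ((L:ℤ)*((L:ℤ)-1))
      = 24*(∑ k ∈ range n, (2*(n:ℤ)-1-2*(k:ℤ))*((k:ℤ)+1)^2) - 24 * Psi n u := by
  set U := ∑ k ∈ range n, (u k : ℤ) with hU
  set S1 := ∑ k ∈ range n, (k:ℤ)*(u k:ℤ) with hS1
  set S2 := ∑ k ∈ range n, ((u k : ℤ))^2 with hS2
  set W := ∑ k ∈ range n, (u k : ℤ) * suf u k (n - k) with hW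
  -- L = n^2 - U
  have hLz : (L:ℤ) = (n:ℤ)^2 - U := by
    rw [hL]
    have : ∑ k ∈ range n, (h k : ℤ) = ∑ k ∈ range n, ((2*(n:ℤ)-1-2*(k:ℤ)) - (u k:ℤ)) :=
      Finset.sum_congr rfl (fun k hk => hv k (mem_range.mp hk))
    rw [this, Finset.sum_sub_distrib, sum_cz]
  -- LHS sum expanded
  have hd1 : ∑ k ∈ range n, (4*(n:ℤ)*(k:ℤ)*(h k:ℤ) + (h k:ℤ)*(4*(n:ℤ) - (h k:ℤ) - 1))
      = ∑ k ∈ range n, (((2*(n:ℤ)-1)*(4*(n:ℤ)-1)-(2*(n:ℤ)-1)^2) + (8*(n:ℤ)^2-4*(n:ℤ)-2)*(k:ℤ)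
          + (-8*(n:ℤ)-4)*(k:ℤ)^2 + 0*(k:ℤ)^3)
        + (-(4*(n:ℤ)+4)) * S1 + (-1) * U + (-1) * S2 := by
    rw [hS1, hU, hS2, Finset.mul_sum, Finset.mul_sum, Finset.mul_sum,
      ← Finset.sum_add_distrib, ← Finset.sum_add_distrib, ← Finset.sum_add_distrib]
    apply Finset.sum_congr rfl
    intro k hk
    rw [hv k (mem_range.mp hk)]
    ring
  have hA := psum_poly n ((2*(n:ℤ)-1)*(4*(n:ℤ)-1)-(2*(n:ℤ)-1)^2) (8*(n:ℤ)^2-4*(n:ℤ)-2) (-8*(n:ℤ)-4) 0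
  have hMz : ∑ k ∈ range n, (2*(n:ℤ)-1-2*(k:ℤ))*((k:ℤ)+1)^2
      = ∑ k ∈ range n, ((2*(n:ℤ)-1) + (4*(n:ℤ)-4)*(k:ℤ) + (2*(n:ℤ)-5)*(k:ℤ)^2 + (-2)*(k:ℤ)^3) := by
    apply Finset.sum_congr rfl
    intro k _
    ring
  have hB := psum_poly n (2*(n:ℤ)-1) (4*(n:ℤ)-4) (2*(n:ℤ)-5) (-2)
  have hPsi := Psi_expand n u
  have hWid := sqsum u n
  rw [hd1, hMz, hPsi, ← hS1, ← hU, ← hW, hLz]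
  rw [← hU, ← hS2, ← hW] at hWid
  linear_combination hA - 2*hB + 12*hWid


/-! ### Main assembly -/

section Main

def GoodCore (n : ℕ) (l : NatPartition) : Prop :=
  l.IsCore (2*n) ∧ l.IsCore (2*n+1) ∧ l.IsCore (2*n+2)

variable {n : ℕ} {l : NatPartition}

lemma good_closure (hn : 1 ≤ n) (hg : GoodCore n l) {t : ℕ} (ht1 : 2*n ≤ t) (ht2 : t ≤ 2*n+2)
    {i : ℕ} (hi : i < len l) (hti : t ≤ bfun l i) :
    ∃ i', i' < len l ∧ bfun l i' = bfun l i - t := by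
  obtain ⟨h0, h1, h2⟩ := hg
  have ht0 : 0 < t := by omega
  have hcases : t = 2*n ∨ t = 2*n+1 ∨ t = 2*n+2 := by omega
  rcases hcases with h | h | h
  · exact core_closure (h ▸ h0) ht0 hi hti
  · exact core_closure (h ▸ h1) ht0 hi hti
  · exact core_closure (h ▸ h2) ht0 hi hti

lemma Gset_row {x : ℕ} (hx : x ∈ Gset n) : x / (2*n) < n ∧ x ∈ rowI n (x/(2*n)) := by
  obtain ⟨k, hk, h1, h2⟩ := mem_Gset.mp hx
  have hdiv : x / (2*n) = k := by
    apply Nat.div_eq_of_lt_le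
    · calc k * (2*n) = 2*n*k := by ring
        _ ≤ x := by omega
    · calc x < 2*n*k+2*n := h2
        _ = (k+1)*(2*n) := by ring
  rw [hdiv]
  refine ⟨hk, ?_⟩
  unfold rowI
  rw [Finset.mem_Ico]
  omega

lemma bfun_gap (hn : 1 ≤ n) (hg : GoodCore n l) :
    ∀ x i, i < len l → bfun l i = x → x ∈ Gset n := by
  intro x
  induction x using Nat.strong_induction_on with
  | _ x IH =>
    intro i hi hbx
    by_contra hxG
    have hx0 : 0 < x := by
      have h1 := lam_pos hi
      unfold bfun at hbx
      omega
    have h2n : 0 < 2*n := by omega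
    set k := x / (2*n) with hk
    set r := x % (2*n) with hr
    have hdm : 2*n*k + r = x := Nat.div_add_mod x (2*n)
    have hrlt : r < 2*n := Nat.mod_lt x h2n
    have hng : ¬ (2*k < r) := by
      intro hc
      exact hxG ((mem_Gset_divmod hn).mpr ⟨hc, by omega⟩)
    push_neg at hng
    have hk1 : 1 ≤ k := by
      by_contra hc
      push_neg at hc
      interval_cases k
      omega
    have hmul : 2*n*1 ≤ 2*n*k := Nat.mul_le_mul_left _ hk1
    set t := if r = 0 then 2*n else (if r = 1 then 2*n+1 else 2*n+2) with hT
    have ht1 : 2*n ≤ t := by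
      rw [hT]; split_ifs <;> omega
    have ht2 : t ≤ 2*n+2 := by
      rw [hT]; split_ifs <;> omega
    have hrt : t - 2*n ≤ r ∧ (r - (t - 2*n)) ≤ 2*(k-1) := by
      rw [hT]; split_ifs <;> omega
    have htx : t ≤ x := by omega
    obtain ⟨i', hi', hb'⟩ := good_closure hn hg ht1 ht2 hi (hbx ▸ htx)
    have hb'' : bfun l i' = x - t := by rw [hb', hbx]
    have hyG : x - t ∈ Gset n := IH (x - t) (by omega) i' hi' hb''
    -- compute div/mod of x - t
    set r' := r - (t - 2*n) with hr'
    have hxt : x - t = 2*n*(k-1) + r' := by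
      have hexp : 2*n*k = 2*n*(k-1) + 2*n := by
        have hk2 : k - 1 + 1 = k := by omega
        calc 2*n*k = 2*n*((k-1)+1) := by rw [hk2]
          _ = 2*n*(k-1) + 2*n := by ring
      omega
    have hr'lt : r' < 2*n := by omega
    have hdiv' : (x - t) / (2*n) = k - 1 := by
      rw [hxt]
      rw [Nat.mul_add_div h2n, Nat.div_eq_of_lt hr'lt]
      omega
    have hmod' : (x - t) % (2*n) = r' := by
      rw [hxt]
      rw [Nat.mul_add_mod]
      exact Nat.mod_eq_of_lt hr'lt
    rw [mem_Gset_divmod hn, hdiv', hmod'] at hyG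
    omega

/-- row fibers -/
def Rk (n : ℕ) (l : NatPartition) (k : ℕ) : Finset ℕ :=
  (range (len l)).filter (fun i => bfun l i / (2*n) = k)

def hrow (n : ℕ) (l : NatPartition) (k : ℕ) : ℕ := (Rk n l k).card

def urow (n : ℕ) (l : NatPartition) (k : ℕ) : ℕ := 2*n-1-2*k - hrow n l k

lemma bfun_injOn (l : NatPartition) {s : Finset ℕ} (hs : s ⊆ range (len l)) :
    Set.InjOn (bfun l) ↑s := by
  intro i hi j hj hij
  rw [Finset.mem_coe] at hi hj
  have hi' : i < len l := mem_range.mp (hs hi)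
  have hj' : j < len l := mem_range.mp (hs hj)
  by_contra hne
  rcases Nat.lt_or_ge i j with hlt | hge
  · have := bfun_strict_anti (l := l) hlt hj'; omega
  · have hlt : j < i := by omega
    have := bfun_strict_anti (l := l) hlt hi'; omega

lemma Rk_maps (hn : 1 ≤ n) (hg : GoodCore n l) {k : ℕ} :
    ∀ i ∈ Rk n l k, bfun l i ∈ rowI n k := by
  intro i hi
  rw [Rk, Finset.mem_filter, mem_range] at hi
  obtain ⟨hi1, hi2⟩ := hi
  have hgap := bfun_gap hn hg (bfun l i) i hi1 rfl
  have := Gset_row hgap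
  rw [hi2] at this
  exact this.2

lemma hrow_le (hn : 1 ≤ n) (hg : GoodCore n l) {k : ℕ} (hk : k < n) :
    hrow n l k ≤ 2*n-1-2*k := by
  have h1 : hrow n l k ≤ (rowI n k).card := by
    apply Finset.card_le_card_of_injOn (fun i => bfun l i)
    · exact Rk_maps hn hg
    · exact bfun_injOn l (Finset.filter_subset _ _)
  rw [card_rowI hk] at h1
  exact h1

lemma sum_hrow (hn : 1 ≤ n) (hg : GoodCore n l) :
    ∑ k ∈ range n, hrow n l k = len l := by
  symm
  rw [← Finset.card_range (len l)]
  apply Finset.card_eq_sum_card_fiberwise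
  intro i hi
  simp only [Finset.mem_coe, mem_range] at hi ⊢
  exact (Gset_row (bfun_gap hn hg (bfun l i) i hi rfl)).1

lemma Tk_injOn (hn : 1 ≤ n) {k : ℕ} :
    Set.InjOn (fun i => bfun l i % (2*n)) ↑(Rk n l k) := by
  intro i hi j hj hij
  rw [Finset.mem_coe, Rk, Finset.mem_filter] at hi hj
  have h2n : 0 < 2*n := by omega
  have hbi : bfun l i = 2*n*k + bfun l i % (2*n) := by
    conv_lhs => rw [← Nat.div_add_mod (bfun l i) (2*n)]
    rw [hi.2]
  have hbj : bfun l j = 2*n*k + bfun l j % (2*n) := by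
    conv_lhs => rw [← Nat.div_add_mod (bfun l j) (2*n)]
    rw [hj.2]
  have hbeq : bfun l i = bfun l j := by
    simp only at hij
    omega
  exact bfun_injOn l (Finset.filter_subset (fun i => bfun l i / (2*n) = k) _)
    (Finset.mem_coe.mpr (Finset.mem_filter.mpr ⟨hi.1, hi.2⟩))
    (Finset.mem_coe.mpr (Finset.mem_filter.mpr ⟨hj.1, hj.2⟩)) hbeq

lemma Tk_card (hn : 1 ≤ n) {k : ℕ} :
    ((Rk n l k).image (fun i => bfun l i % (2*n))).card = hrow n l k :=
  Finset.card_image_of_injOn (Tk_injOn hn)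

lemma rowsum_le (hn : 1 ≤ n) (hg : GoodCore n l) {k : ℕ} (hk : k < n) :
    2 * ∑ i ∈ Rk n l k, (bfun l i : ℤ)
      ≤ 4*(n:ℤ)*(k:ℤ)*(hrow n l k:ℤ) + (hrow n l k:ℤ)*(4*(n:ℤ) - (hrow n l k:ℤ) - 1) := by
  have h2n : 0 < 2*n := by omega
  set T := (Rk n l k).image (fun i => bfun l i % (2*n)) with hT
  have hTcard : T.card = hrow n l k := Tk_card hn
  have hTlt : ∀ x ∈ T, x < 2*n := by
    intro x hx
    rw [hT, Finset.mem_image] at hx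
    obtain ⟨i, _, hix⟩ := hx
    rw [← hix]
    exact Nat.mod_lt _ h2n
  have htop := sum_top T.card T (2*n) rfl hTlt
  have hTsum : ∑ i ∈ Rk n l k, (bfun l i : ℤ)
      = 2*(n:ℤ)*(k:ℤ)*(hrow n l k:ℤ) + ∑ x ∈ T, (x:ℤ) := by
    have hsi : ∑ x ∈ T, (x:ℤ) = ∑ i ∈ Rk n l k, ((bfun l i % (2*n) : ℕ) : ℤ) := by
      rw [hT]
      exact Finset.sum_image (fun i hi j hj hij => Tk_injOn hn hi hj hij)
    rw [hsi]
    have hper : ∀ i ∈ Rk n l k, (bfun l i : ℤ) = 2*(n:ℤ)*(k:ℤ) + ((bfun l i % (2*n) : ℕ) : ℤ) := by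
      intro i hi
      rw [Rk, Finset.mem_filter] at hi
      obtain ⟨md, hmd⟩ : ∃ md, bfun l i % (2*n) = md := ⟨_, rfl⟩
      have hb : bfun l i = 2*n*k + md := by
        conv_lhs => rw [← Nat.div_add_mod (bfun l i) (2*n)]
        rw [hi.2, hmd]
      rw [hmd, hb]
      push_cast
      ring
    rw [Finset.sum_congr rfl hper, Finset.sum_add_distrib, Finset.sum_const]
    simp only [nsmul_eq_mul]
    rw [hrow, mul_comm]
  rw [hTsum, hTcard] at *
  have h2ncast : ((2*n : ℕ) : ℤ) = 2*(n:ℤ) := by push_cast; ring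
  rw [h2ncast] at htop
  linarith

lemma Tk_bounds (hn : 1 ≤ n) (hg : GoodCore n l) {k r : ℕ} (hk : k < n)
    (hr : r ∈ (Rk n l k).image (fun i => bfun l i % (2*n))) : 2*k+1 ≤ r ∧ r < 2*n := by
  rw [Finset.mem_image] at hr
  obtain ⟨i, hiRk, hir⟩ := hr
  have hiRk' := hiRk
  rw [Rk, Finset.mem_filter, mem_range] at hiRk'
  obtain ⟨hiL, hidiv⟩ := hiRk'
  have hrowmem := Rk_maps hn hg i hiRk
  rw [rowI, Finset.mem_Ico] at hrowmem
  have hbi : bfun l i = 2*n*k + r := by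
    conv_lhs => rw [← Nat.div_add_mod (bfun l i) (2*n)]
    rw [hidiv, hir]
  omega

lemma chain_transfer (hn : 1 ≤ n) (hg : GoodCore n l) {k : ℕ} (hk2 : k+1 < n) {r t : ℕ}
    (hrT : r ∈ (Rk n l (k+1)).image (fun i => bfun l i % (2*n)))
    (ht1 : 2*n ≤ t) (ht2 : t ≤ 2*n+2) :
    r - (t-2*n) ∈ (Rk n l k).image (fun i => bfun l i % (2*n)) := by
  have h2n : 0 < 2*n := by omega
  have hb := Tk_bounds hn hg hk2 hrT
  rw [Finset.mem_image] at hrT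
  obtain ⟨i, hiRk, hir⟩ := hrT
  have hiRk' := hiRk
  rw [Rk, Finset.mem_filter, mem_range] at hiRk'
  obtain ⟨hiL, hidiv⟩ := hiRk'
  have hbi : bfun l i = 2*n*(k+1) + r := by
    conv_lhs => rw [← Nat.div_add_mod (bfun l i) (2*n)]
    rw [hidiv, hir]
  have hexp : 2*n*(k+1) = 2*n*k + 2*n := by ring
  set r' := r - (t - 2*n) with hr'
  have hr'b : r' < 2*n ∧ 1 ≤ r' := by omega
  obtain ⟨i', hi', hb'⟩ := good_closure hn hg ht1 ht2 hiL (by omega : t ≤ bfun l i)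
  have hval : bfun l i' = 2*n*k + r' := by
    rw [hb']
    omega
  have hdiv' : bfun l i' / (2*n) = k := by
    rw [hval, Nat.mul_add_div h2n, Nat.div_eq_of_lt hr'b.1]
    omega
  have hmod' : bfun l i' % (2*n) = r' := by
    rw [hval, Nat.mul_add_mod]
    exact Nat.mod_eq_of_lt hr'b.1
  rw [Finset.mem_image]
  exact ⟨i', Finset.mem_filter.mpr ⟨mem_range.mpr hi', hdiv'⟩, hmod'⟩

lemma hrow_chain (hn : 1 ≤ n) (hg : GoodCore n l) {k : ℕ} (hk2 : k+1 < n)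
    (h1 : 1 ≤ hrow n l (k+1)) : hrow n l (k+1) + 2 ≤ hrow n l k := by
  set T1 := (Rk n l (k+1)).image (fun i => bfun l i % (2*n)) with hT1
  set T0 := (Rk n l k).image (fun i => bfun l i % (2*n)) with hT0
  have hc1 : T1.card = hrow n l (k+1) := Tk_card hn
  have hc0 : T0.card = hrow n l k := Tk_card hn
  have hne : T1.Nonempty := by rw [← Finset.card_pos]; omega
  set m := T1.min' hne with hm
  have hmT1 : m ∈ T1 := T1.min'_mem hne
  have hmb := Tk_bounds hn hg hk2 hmT1
  have hsub0 : m - 1 ∈ T0 := by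
    have := chain_transfer hn hg hk2 hmT1 (by omega : 2*n ≤ 2*n+1) (by omega)
    have he : 2*n+1 - 2*n = 1 := by omega
    rwa [he] at this
  have hsub1 : m - 2 ∈ T0 := by
    have := chain_transfer hn hg hk2 hmT1 (by omega : 2*n ≤ 2*n+2) (by omega)
    have he : 2*n+2 - 2*n = 2 := by omega
    rwa [he] at this
  have hsubT : T1 ⊆ T0 := by
    intro r hr
    have := chain_transfer hn hg hk2 hr (le_refl (2*n)) (by omega)
    have he : 2*n - 2*n = 0 := by omega
    rwa [he, Nat.sub_zero] at this
  have hnot1 : m - 1 ∉ T1 := by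
    intro hc
    have := T1.min'_le _ hc
    omega
  have hnot2 : m - 2 ∉ insert (m-1) T1 := by
    intro hc
    rw [Finset.mem_insert] at hc
    rcases hc with hc | hc
    · omega
    · have := T1.min'_le _ hc
      omega
  have hsubset : insert (m-2) (insert (m-1) T1) ⊆ T0 := by
    intro x hx
    rw [Finset.mem_insert, Finset.mem_insert] at hx
    rcases hx with h | h | h
    · rw [h]; exact hsub1
    · rw [h]; exact hsub0
    · exact hsubT h
  have hcard : (insert (m-2) (insert (m-1) T1)).card = T1.card + 2 := by
    rw [Finset.card_insert_of_notMem hnot2, Finset.card_insert_of_notMem hnot1]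
  have := Finset.card_le_card hsubset
  omega

lemma urow_chain (hn : 1 ≤ n) (hg : GoodCore n l) {k : ℕ} (hk2 : k+1 < n) :
    urow n l (k+1) = 2*n-3-2*k ∨ urow n l k ≤ urow n l (k+1) := by
  have hle1 := hrow_le hn hg (by omega : k+1 < n)
  have hle0 := hrow_le hn hg (by omega : k < n)
  by_cases h0 : hrow n l (k+1) = 0
  · left
    unfold urow
    omega
  · right
    have := hrow_chain hn hg hk2 (by omega)
    unfold urow
    omega

/-- the central inequality: 24·size ≤ 24·M-sum − 24·Psi -/
lemma size_bound (hn : 1 ≤ n) (hg : GoodCore n l) :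
    24 * (l.size : ℤ) ≤ 24*(∑ k ∈ range n, (2*(n:ℤ)-1-2*(k:ℤ))*((k:ℤ)+1)^2)
      - 24 * Psi n (urow n l) := by
  have hv : ∀ k, k < n → (hrow n l k : ℤ) = (2*(n:ℤ)-1-2*(k:ℤ)) - (urow n l k : ℤ) := by
    intro k hk
    have h1 := hrow_le hn hg hk
    have h2 : urow n l k = 2*n-1-2*k - hrow n l k := rfl
    have h3 : hrow n l k + urow n l k = 2*n-1-2*k := by omega
    have h4 : ((2*n-1-2*k : ℕ) : ℤ) = 2*(n:ℤ)-1-2*(k:ℤ) := cast_sub_row hk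
    have h5 : ((hrow n l k + urow n l k : ℕ) : ℤ) = ((2*n-1-2*k : ℕ) : ℤ) := by rw [h3]
    push_cast at h5
    omega
  have hL : ((len l : ℕ):ℤ) = ∑ k ∈ range n, (hrow n l k : ℤ) := by
    rw [← sum_hrow hn hg]
    push_cast
    rfl
  have hid := main_identity n (urow n l) (hrow n l) (len l) hv hL
  -- fiberwise decomposition of the beta sum
  have hfib : ∑ k ∈ range n, ∑ i ∈ Rk n l k, (bfun l i : ℤ) = ∑ i ∈ range (len l), (bfun l i : ℤ) := by
    unfold Rk
    apply Finset.sum_fiberwise_of_maps_to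
    intro i hi
    rw [mem_range] at hi ⊢
    exact (Gset_row (bfun_gap hn hg (bfun l i) i hi rfl)).1
  have hsb := sum_bfun (l := l)
  have hsbz : 2 * ∑ i ∈ range (len l), (bfun l i : ℤ) = 2 * (l.size:ℤ) + (len l:ℤ)*((len l:ℤ)-1) := by
    have : ((2 * ∑ i ∈ range (len l), bfun l i : ℕ) : ℤ) = ((2 * l.size + len l * (len l - 1) : ℕ) : ℤ) := by
      rw [hsb]
    have hlen1 : (1:ℕ) ≤ len l ∨ len l = 0 := by omega
    rcases hlen1 with h | h
    · push_cast [Nat.cast_sub h] at this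
      push_cast
      linarith
    · rw [h] at this ⊢
      simp at this ⊢
      linarith
  have hrows : ∑ k ∈ range n, (2 * ∑ i ∈ Rk n l k, (bfun l i : ℤ))
      ≤ ∑ k ∈ range n, (4*(n:ℤ)*(k:ℤ)*(hrow n l k:ℤ) + (hrow n l k:ℤ)*(4*(n:ℤ) - (hrow n l k:ℤ) - 1)) := by
    apply Finset.sum_le_sum
    intro k hk
    exact rowsum_le hn hg (mem_range.mp hk)
  have h2 : ∑ k ∈ range n, (2 * ∑ i ∈ Rk n l k, (bfun l i : ℤ))
      = 2 * ∑ k ∈ range n, ∑ i ∈ Rk n l k, (bfun l i : ℤ) := by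
    rw [Finset.mul_sum]
  rw [h2, hfib] at hrows
  -- combine: 24 size = 12*(2Σb) - 12 L(L-1) ≤ 12*Σbounds - 12 L(L-1) = identity RHS
  have hcomb : 24 * (l.size:ℤ) = 12 * (2 * ∑ i ∈ range (len l), (bfun l i : ℤ)) - 12*((len l:ℤ)*((len l:ℤ)-1)) := by
    rw [hsbz]; ring
  rw [hcomb]
  calc 12 * (2 * ∑ i ∈ range (len l), (bfun l i : ℤ)) - 12*((len l:ℤ)*((len l:ℤ)-1))
      ≤ 12 * (∑ k ∈ range n, (4*(n:ℤ)*(k:ℤ)*(hrow n l k:ℤ) + (hrow n l k:ℤ)*(4*(n:ℤ) - (hrow n l k:ℤ) - 1)))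
        - 12*((len l:ℤ)*((len l:ℤ)-1)) := by linarith
    _ = 24*(∑ k ∈ range n, (2*(n:ℤ)-1-2*(k:ℤ))*((k:ℤ)+1)^2) - 24 * Psi n (urow n l) := hid

/-- closed form of the M-sum -/
lemma Mz_eq (n : ℕ) : 12 * ∑ k ∈ range n, (2*(n:ℤ)-1-2*(k:ℤ))*((k:ℤ)+1)^2
    = 2*(n:ℤ)*((n:ℤ)+1)*((n:ℤ)^2+(n:ℤ)+1) := by
  have hMz : ∑ k ∈ range n, (2*(n:ℤ)-1-2*(k:ℤ))*((k:ℤ)+1)^2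
      = ∑ k ∈ range n, ((2*(n:ℤ)-1) + (4*(n:ℤ)-4)*(k:ℤ) + (2*(n:ℤ)-5)*(k:ℤ)^2 + (-2)*(k:ℤ)^3) := by
    apply Finset.sum_congr rfl
    intro k _
    ring
  have hB := psum_poly n (2*(n:ℤ)-1) (4*(n:ℤ)-4) (2*(n:ℤ)-5) (-2)
  rw [hMz]
  linear_combination hB


lemma Psi_nonneg (hn : 1 ≤ n) (hg : GoodCore n l) : 0 ≤ Psi n (urow n l) := by
  by_cases hex : ∃ k, k < n ∧ 0 < urow n l k
  · exact le_of_lt (Psi_pos n hn (urow n l)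
      (fun k _ => by unfold urow; omega)
      (fun k hk => urow_chain hn hg hk) hex)
  · push_neg at hex
    rw [Psi_zero_of n _ (fun k hk => by have := hex k hk; omega)]

lemma size_le (hn : 1 ≤ n) (hg : GoodCore n l) :
    l.size ≤ (n + 1) * (n + 1).choose 3 + (n + 2).choose 3 := by
  have hsb := size_bound hn hg
  have hP := Psi_nonneg hn hg
  have hMz := Mz_eq n
  have hM := M_closed_form n
  have h1 : (l.size:ℤ) ≤ (((n + 1) * (n + 1).choose 3 + (n + 2).choose 3 : ℕ) : ℤ) := by
    nlinarith [hsb, hP, hMz, hM]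
  exact_mod_cast h1

lemma urow_zero_of_max (hn : 1 ≤ n) (hg : GoodCore n l)
    (hsz : l.size = (n + 1) * (n + 1).choose 3 + (n + 2).choose 3) :
    ∀ k, k < n → urow n l k = 0 := by
  by_contra hc
  push_neg at hc
  obtain ⟨k, hk, h0⟩ := hc
  have hpos := Psi_pos n hn (urow n l)
    (fun k _ => by unfold urow; omega)
    (fun k hk => urow_chain hn hg hk) ⟨k, hk, by omega⟩
  have hsb := size_bound hn hg
  have hMz := Mz_eq n
  have hM := M_closed_form n
  have hszz : (l.size:ℤ) = (((n + 1) * (n + 1).choose 3 + (n + 2).choose 3 : ℕ) : ℤ) := by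
    exact_mod_cast congrArg (Nat.cast : ℕ → ℤ) hsz
  nlinarith [hsb, hpos, hMz, hM, hszz]

lemma image_eq_of_max (hn : 1 ≤ n) (hg : GoodCore n l)
    (hsz : l.size = (n + 1) * (n + 1).choose 3 + (n + 2).choose 3) :
    (range (len l)).image (bfun l) = Gset n := by
  have hu := urow_zero_of_max hn hg hsz
  apply Finset.Subset.antisymm
  · intro x hx
    rw [Finset.mem_image] at hx
    obtain ⟨i, hi, hix⟩ := hx
    exact bfun_gap hn hg x i (mem_range.mp hi) hix
  · intro x hx
    obtain ⟨hklt, hxrow⟩ := Gset_row hx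
    set k := x / (2*n) with hk
    have hrowfull : hrow n l k = 2*n-1-2*k := by
      have h1 := hrow_le hn hg hklt
      have h2 := hu k hklt
      unfold urow at h2
      omega
    have hfull : (Rk n l k).image (bfun l) = rowI n k := by
      apply Finset.eq_of_subset_of_card_le
      · intro y hy
        rw [Finset.mem_image] at hy
        obtain ⟨i, hiRk, hiy⟩ := hy
        rw [← hiy]
        exact Rk_maps hn hg i hiRk
      · have hinj : Set.InjOn (bfun l) ↑(Rk n l k) :=
          bfun_injOn l (fun i hi => Finset.mem_of_mem_filter i hi)
        rw [card_rowI hklt, Finset.card_image_of_injOn hinj, ← hrowfull]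
        exact le_refl _
    rw [← hfull] at hxrow
    rw [Finset.mem_image] at hxrow ⊢
    obtain ⟨i, hiRk, hiy⟩ := hxrow
    rw [Rk, Finset.mem_filter] at hiRk
    exact ⟨i, hiRk.1, hiy⟩

/-- the unique maximal core partition -/
def maxCore (n : ℕ) : NatPartition := pOf (Gset n) (fun _ hx => Gset_pos hx)

lemma maxCore_image : (range (len (maxCore n))).image (bfun (maxCore n)) = Gset n :=
  pOf_image (Gset n) (fun _ hx => Gset_pos hx)

lemma eq_maxCore_of_max (hn : 1 ≤ n) (hg : GoodCore n l)
    (hsz : l.size = (n + 1) * (n + 1).choose 3 + (n + 2).choose 3) : l = maxCore n := by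
  apply eq_of_bimage_eq
  rw [image_eq_of_max hn hg hsz, maxCore_image]

lemma maxCore_good (hn : 1 ≤ n) : GoodCore n (maxCore n) := by
  have hclo : ∀ t, 2*n ≤ t → t ≤ 2*n+2 →
      ∀ i, i < len (maxCore n) → t ≤ bfun (maxCore n) i →
      ∃ i', i' < len (maxCore n) ∧ bfun (maxCore n) i' = bfun (maxCore n) i - t := by
    intro t ht1 ht2 i hi hti
    have hmem : bfun (maxCore n) i ∈ Gset n := by
      rw [← maxCore_image]
      exact Finset.mem_image_of_mem _ (mem_range.mpr hi)
    have hy : bfun (maxCore n) i - t ∈ Gset n := Gset_closed ht1 ht2 hmem hti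
    rw [← maxCore_image, Finset.mem_image] at hy
    obtain ⟨i', hi', hiy⟩ := hy
    exact ⟨i', mem_range.mp hi', hiy⟩
  refine ⟨?_, ?_, ?_⟩
  · exact closure_core (by omega) (hclo (2*n) (le_refl _) (by omega))
  · exact closure_core (by omega) (hclo (2*n+1) (by omega) (by omega))
  · exact closure_core (by omega) (hclo (2*n+2) (by omega) (by omega))

lemma maxCore_size (hn : 1 ≤ n) :
    (maxCore n).size = (n + 1) * (n + 1).choose 3 + (n + 2).choose 3 := by
  have hlen : len (maxCore n) = n*n := by
    rw [maxCore, pOf_len, card_Gset]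
  have hsb := sum_bfun (l := maxCore n)
  have hsum : ∑ i ∈ range (len (maxCore n)), bfun (maxCore n) i = ∑ x ∈ Gset n, x := by
    rw [← maxCore_image]
    rw [Finset.sum_image (fun i hi j hj hij => bfun_injOn (maxCore n)
      (le_refl _) (Finset.mem_coe.mpr hi) (Finset.mem_coe.mpr hj) hij)]
  rw [hsum, hlen] at hsb
  -- cast to ℤ
  have hsbz : 2 * ∑ x ∈ Gset n, (x:ℤ) = 2 * ((maxCore n).size : ℤ) + (n:ℤ)*(n:ℤ)*((n:ℤ)*(n:ℤ)-1) := by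
    have hc : ((2 * ∑ x ∈ Gset n, x : ℕ) : ℤ) = ((2 * (maxCore n).size + n*n * (n*n - 1) : ℕ) : ℤ) := by
      rw [hsb]
    rcases Nat.eq_zero_or_pos n with h0 | h1
    · omega
    · have hn2 : 1 ≤ n*n := Nat.one_le_iff_ne_zero.mpr (by positivity)
      push_cast [Nat.cast_sub hn2] at hc
      push_cast
      linarith
  have hsg := sum_Gset (n := n)
  have hM := M_closed_form n
  have h288 : 288 * ((maxCore n).size : ℤ)
      = 288 * (((n + 1) * (n + 1).choose 3 + (n + 2).choose 3 : ℕ) : ℤ) := by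
    nlinarith [hsbz, hsg, hM]
  have : ((maxCore n).size : ℤ) = (((n + 1) * (n + 1).choose 3 + (n + 2).choose 3 : ℕ) : ℤ) := by
    linarith
  exact_mod_cast this

end Main

end Core18

theorem stmt18 (n : ℕ) (hn : 0 < n) :
    IsGreatest {s : ℕ | ∃ l : NatPartition, l.IsCore (2 * n) ∧ l.IsCore (2 * n + 1) ∧
        l.IsCore (2 * n + 2) ∧ l.size = s}
      ((n + 1) * (n + 1).choose 3 + (n + 2).choose 3) ∧
    {l : NatPartition | l.IsCore (2 * n) ∧ l.IsCore (2 * n + 1) ∧ l.IsCore (2 * n + 2) ∧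
      l.size = (n + 1) * (n + 1).choose 3 + (n + 2).choose 3}.ncard = 1 := by
  have hn1 : 1 ≤ n := hn
  have hgood := Core18.maxCore_good hn1
  have hsize := Core18.maxCore_size hn1
  constructor
  · constructor
    · exact ⟨Core18.maxCore n, hgood.1, hgood.2.1, hgood.2.2, hsize⟩
    · rintro s ⟨l, h1, h2, h3, h4⟩
      have := Core18.size_le hn1 ⟨h1, h2, h3⟩
      omega
  · have hset : {l : NatPartition | l.IsCore (2 * n) ∧ l.IsCore (2 * n + 1) ∧ l.IsCore (2 * n + 2) ∧
        l.size = (n + 1) * (n + 1).choose 3 + (n + 2).choose 3} = {Core18.maxCore n} := by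
      ext l
      simp only [Set.mem_setOf_eq, Set.mem_singleton_iff]
      constructor
      · rintro ⟨h1, h2, h3, h4⟩
        exact Core18.eq_maxCore_of_max hn1 ⟨h1, h2, h3⟩ h4
      · rintro rfl
        exact ⟨hgood.1, hgood.2.1, hgood.2.2, hsize⟩
    rw [hset]
    exact Set.ncard_singleton _
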